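/- arXiv:1504.06512 — 5 statements merged into one kernel-verified Lean document; each statement's English description precedes it below -/
import Mathlib

section
/- Let q ≥ 2 be a prime power, r ≥ 2, d ≥ 2 integers with q > d. Endow F_q^{r-1} × F_{r,d} with the uniform probability. Let C_1(a,F) = 1 if the univariate polynomial F(a, X_r) has a root in F_q, and C_1(a,F) = ∞ otherwise. Then P[C_1 = 1] = Σ_{j=1}^{d} (-1)^{j-1} · C(q,j) · q^{-j} + (-1)^d · C(q-1,d) · q^{-d-1}. -/
/-!
For fixed `a`, the specialization `F ↦ F(a, X)` is a surjective linear map from the polynomials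
of total degree `≤ d` onto the univariate polynomials of degree `≤ d`. All its fibres therefore
have the same size, so the proportion of `F` for which `F(a, X)` has a root is the proportion of
univariate `g` of degree `≤ d` having a root, independently of `a`. That proportion is computed
by inclusion–exclusion over the prescribed roots: `j` given points are common zeros of exactly
`q ^ (d + 1 - j)` such `g` (Lagrange interpolation for `j ≤ d + 1`, only `g = 0` beyond), and
the alternating binomial sums collapse the terms with `j > d` into `(-1)^d C(q-1,d)`.
-/

open Function Finset Polynomial

theorem AddMonoidHom.natCard_subtype_comp_mul_natCard {A B : Type*} [AddGroup A] [AddMonoid B]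
    [Finite A] [Finite B] (f : A →+ B) (hf : Surjective f) (p : B → Prop) :
    Nat.card {a // p (f a)} * Nat.card B = Nat.card {b // p b} * Nat.card A := by
  classical
  have := Fintype.ofFinite A
  have := Fintype.ofFinite B
  simp only [Nat.card_eq_fintype_card, Fintype.card_subtype]
  have hfib (b : B) : #{a | f a = b} = #{a | f a = 0} :=
    AddMonoidHom.card_fiber_eq_of_mem_range f (hf b) (hf 0)
  have hfib_p (b) (hb : b ∈ ({b | p b} : Finset B)) :
      #{a ∈ {a | p (f a)} | f a = b} = #{a | f a = 0} := by
    rw [← hfib b, filter_filter]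
    exact congrArg card (filter_congr fun a _ => by simp_all)
  rw [card_eq_sum_card_fiberwise (f := f) (t := {b | p b}) (fun a ha => by simpa using ha),
    ← card_univ (α := A), card_eq_sum_card_fiberwise (f := f) (t := univ) (by simp)]
  simp only [sum_congr rfl hfib_p, hfib, sum_const, card_univ, smul_eq_mul]
  ring

theorem sum_range_neg_one_pow_mul_choose_mul_pow_tsub {q : ℕ} (hq : q ≠ 0) (d : ℕ) :
    ∑ j ∈ range (q + 1), (-1 : ℚ) ^ j * q.choose j * (q : ℚ) ^ (d + 1 - j) =
      (q : ℚ) ^ (d + 1) *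
        (1 - (∑ j ∈ Icc 1 d, (-1 : ℚ) ^ (j - 1) * q.choose j * (q : ℚ)⁻¹ ^ j
          + (-1 : ℚ) ^ d * (q - 1).choose d * (q : ℚ)⁻¹ ^ (d + 1))) := by
  have hfull : ∑ j ∈ range (q + 1), (-1 : ℚ) ^ j * q.choose j = 0 := by
    exact_mod_cast Int.alternating_sum_range_choose_of_ne hq
  have hpartial :
      ∑ j ∈ range (d + 1), (-1 : ℚ) ^ j * q.choose j = (-1) ^ d * (q - 1).choose d := by
    obtain ⟨p, rfl⟩ := Nat.exists_eq_add_one.mpr (Nat.pos_of_ne_zero hq)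
    exact_mod_cast Int.alternating_sum_range_choose_eq_choose
  -- `f j` vanishes both for `j > q` and for `j > d`.
  set f : ℕ → ℚ := fun j => (-1 : ℚ) ^ j * q.choose j * ((q : ℚ) ^ (d + 1 - j) - 1)
  have hf : ∑ j ∈ range (q + 1), f j = ∑ j ∈ range (d + 1), f j := by
    rw [sum_subset (range_mono (by omega : q + 1 ≤ q + d + 2)) ?_,
      ← sum_subset (range_mono (by omega : d + 1 ≤ q + d + 2)) ?_]
    · intro j _ hj
      simp [f, Nat.sub_eq_zero_of_le (not_lt.mp (mem_range.not.mp hj))]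
    · intro j _ hj
      simp [f, Nat.choose_eq_zero_of_lt (not_lt.mp (mem_range.not.mp hj))]
  have hlow : ∑ j ∈ range (q + 1), (-1 : ℚ) ^ j * q.choose j * (q : ℚ) ^ (d + 1 - j) =
      ∑ j ∈ range (d + 1), (-1 : ℚ) ^ j * q.choose j * (q : ℚ) ^ (d + 1 - j)
        - (-1) ^ d * (q - 1).choose d := by
    have hsplit (j : ℕ) : (-1 : ℚ) ^ j * q.choose j * (q : ℚ) ^ (d + 1 - j) =
        (-1 : ℚ) ^ j * q.choose j + f j := by
      simp only [f]
      ring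
    simp only [hsplit, sum_add_distrib, hfull, hf, zero_add, ← hpartial]
    ring
  have hq' : (q : ℚ) ≠ 0 := Nat.cast_ne_zero.mpr hq
  have hterm (j) (hj : j ∈ Icc 1 d) :
      (-1 : ℚ) ^ j * q.choose j * (q : ℚ) ^ (d + 1 - j) =
        -((q : ℚ) ^ (d + 1) * ((-1) ^ (j - 1) * q.choose j * (q : ℚ)⁻¹ ^ j)) := by
    obtain ⟨hj1, hjd⟩ := mem_Icc.mp hj
    obtain ⟨i, rfl⟩ : ∃ i, j = i + 1 := ⟨j - 1, by omega⟩
    rw [pow_sub₀ _ hq' (by omega), Nat.add_sub_cancel, inv_pow]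
    ring
  rw [hlow, range_eq_Ico, sum_eq_sum_Ico_succ_bot (by omega), zero_add, Ico_add_one_right_eq_Icc,
    sum_congr rfl hterm, sum_neg_distrib, ← mul_sum, pow_zero, one_mul, Nat.choose_zero_right,
    Nat.cast_one, Nat.sub_zero]
  linear_combination (-1 : ℚ) ^ d * (q - 1).choose d * mul_inv_cancel₀ (pow_ne_zero (d + 1) hq')

namespace Polynomial

theorem mem_degreeLT_succ_iff_natDegree_le {R : Type*} [Semiring R] {n : ℕ} {p : R[X]} :
    p ∈ degreeLT R (n + 1) ↔ p.natDegree ≤ n := by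
  rw [degreeLT_succ_eq_degreeLE, mem_degreeLE, natDegree_le_iff_degree_le, Nat.cast_withBot]

theorem totalDegree_toMvPolynomial_le {R σ : Type*} [CommSemiring R] (i : σ) (p : R[X]) :
    (p.toMvPolynomial i).totalDegree ≤ p.natDegree := by
  rw [toMvPolynomial, aeval_eq_sum_range]
  refine (MvPolynomial.totalDegree_finsetSum _ _).trans (Finset.sup_le fun k hk => ?_)
  refine (MvPolynomial.totalDegree_smul_le _ _).trans ?_
  rw [MvPolynomial.X_pow_eq_monomial]
  refine (MvPolynomial.totalDegree_monomial_le _ _).trans ?_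
  simpa [Nat.lt_succ_iff] using hk

variable {K : Type*} [Field K] [Fintype K]

instance (n : ℕ) : Finite (degreeLT K n) := .of_equiv _ (degreeLTEquiv K n).toEquiv.symm

theorem natCard_degreeLT (n : ℕ) : Nat.card (degreeLT K n) = Fintype.card K ^ n := by
  simp [Nat.card_congr (degreeLTEquiv K n).toEquiv]

theorem natCard_degreeLT_forall_mem_eval_eq_zero (n : ℕ) (t : Finset K) :
    Nat.card {g : degreeLT K n // ∀ c ∈ t, eval c (g : K[X]) = 0} =
      Fintype.card K ^ (n - #t) := by
  classical
  rcases le_or_gt #t n with ht | ht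
  · let ev := (LinearMap.pi fun c : t => leval (c : K)) ∘ₗ (degreeLT K n).subtype
    have hev : Surjective ev := fun v => by
      have hinj : Set.InjOn ((↑) : t → K) (univ : Finset t) := Subtype.val_injective.injOn
      refine ⟨⟨Lagrange.interpolate univ ((↑) : t → K) v, mem_degreeLT.mpr ?_⟩,
        _root_.funext fun c => Lagrange.eval_interpolate_at_node v hinj (mem_univ c)⟩
      exact (Lagrange.degree_interpolate_lt _ hinj).trans_le (by simpa using ht)
    have key := ev.toAddMonoidHom.natCard_subtype_comp_mul_natCard hev (· = 0)
    have hker : {g // ev.toAddMonoidHom g = 0} ≃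
        {g : degreeLT K n // ∀ c ∈ t, eval c (g : K[X]) = 0} :=
      Equiv.subtypeEquivRight fun g => by simp [ev, funext_iff]
    rw [natCard_degreeLT, Nat.card_unique (α := {v : t → K // v = 0}), one_mul,
      Nat.card_congr hker, Nat.card_fun, Nat.card_eq_fintype_card (α := K),
      Nat.card_eq_fintype_card (α := t), Fintype.card_coe, ← pow_sub_mul_pow _ ht] at key
    exact Nat.eq_of_mul_eq_mul_right (pow_pos Fintype.card_pos _) key
  · have hzero (g : {g : degreeLT K n // ∀ c ∈ t, eval c (g : K[X]) = 0}) : (g : K[X]) = 0 :=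
      eq_zero_of_degree_lt_of_eval_finset_eq_zero t
        ((mem_degreeLT.mp g.1.2).trans (by exact_mod_cast ht)) g.2
    rw [Nat.sub_eq_zero_of_le ht.le, pow_zero, Nat.card_eq_one_iff_unique]
    exact ⟨⟨fun g h => by ext; rw [hzero g, hzero h]⟩, ⟨⟨0, by simp⟩⟩⟩

theorem natCard_degreeLT_forall_eval_ne_zero (n : ℕ) :
    (Nat.card {g : degreeLT K n // ∀ x, eval x (g : K[X]) ≠ 0} : ℤ) =
      ∑ j ∈ range (Fintype.card K + 1),
        (-1 : ℤ) ^ j * (Fintype.card K).choose j * Fintype.card K ^ (n - j) := by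
  classical
  have := Fintype.ofFinite (degreeLT K n)
  let S (c : K) : Finset (degreeLT K n) := {g | eval c (g : K[X]) = 0}
  have hS (t : Finset K) : #(t.inf S) = Fintype.card K ^ (n - #t) := by
    rw [← natCard_degreeLT_forall_mem_eval_eq_zero, Nat.card_eq_fintype_card,
      Fintype.card_subtype]
    congr 1
    ext g
    simp [S, mem_inf]
  have hIE := inclusion_exclusion_card_inf_compl univ S
  simp only [hS, Nat.cast_pow] at hIE
  rw [sum_powerset_apply_card (fun j => (-1 : ℤ) ^ j * (Fintype.card K : ℤ) ^ (n - j)),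
    card_univ] at hIE
  have hrootless : #(univ.inf fun c => (S c)ᶜ) =
      #{g : degreeLT K n | ∀ x, eval x (g : K[X]) ≠ 0} := by
    congr 1
    ext g
    simp [S, mem_inf]
  rw [Nat.card_eq_fintype_card, Fintype.card_subtype, ← hrootless, hIE]
  exact sum_congr rfl fun j _ => by rw [nsmul_eq_mul]; ring

theorem natCard_degreeLT_exists_eval_eq_zero (d : ℕ) :
    (Nat.card {g : degreeLT K (d + 1) // ∃ x, eval x (g : K[X]) = 0} : ℚ) =
      (∑ j ∈ Icc 1 d,
          (-1 : ℚ) ^ (j - 1) * (Fintype.card K).choose j * (Fintype.card K : ℚ)⁻¹ ^ j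
        + (-1 : ℚ) ^ d * (Fintype.card K - 1).choose d * (Fintype.card K : ℚ)⁻¹ ^ (d + 1))
        * Fintype.card K ^ (d + 1) := by
  have hsplit : (Nat.card {g : degreeLT K (d + 1) // ∃ x, eval x (g : K[X]) = 0} : ℚ) +
      Nat.card {g : degreeLT K (d + 1) // ∀ x, eval x (g : K[X]) ≠ 0} =
        Fintype.card K ^ (d + 1) := by
    classical
    simp_rw [ne_eq, ← not_exists]
    rw [← Nat.cast_add, ← Nat.card_sum, Nat.card_congr (Equiv.sumCompl _), natCard_degreeLT,
      Nat.cast_pow]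
  have hrootless :=
    congrArg (Int.cast (R := ℚ)) (natCard_degreeLT_forall_eval_ne_zero (K := K) (d + 1))
  push_cast at hrootless
  rw [sum_range_neg_one_pow_mul_choose_mul_pow_tsub Fintype.card_ne_zero] at hrootless
  linear_combination hsplit - hrootless

end Polynomial

namespace MvPolynomial

variable {R : Type*} [CommSemiring R] {m : ℕ}

/-- `evalInit a F` is the univariate polynomial `F(a, X)`. -/
noncomputable def evalInit (a : Fin m → R) : MvPolynomial (Fin (m + 1)) R →ₐ[R] R[X] :=
  aeval (Fin.snoc (fun i => Polynomial.C (a i)) Polynomial.X)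

theorem eval_evalInit (a : Fin m → R) (F : MvPolynomial (Fin (m + 1)) R) (x : R) :
    (evalInit a F).eval x = eval (Fin.snoc a x) F := by
  rw [← Polynomial.coe_aeval_eq_eval, evalInit, comp_aeval_apply]
  change _ = aeval (Fin.snoc a x) F
  congr 2
  funext i
  induction i using Fin.lastCases <;> simp

theorem natDegree_evalInit_le (a : Fin m → R) (F : MvPolynomial (Fin (m + 1)) R) :
    (evalInit a F).natDegree ≤ F.totalDegree := by
  rw [evalInit]
  simpa using aeval_natDegree_le (n := 1) F le_rfl _ fun i => by
    induction i using Fin.lastCases <;> simp [Polynomial.natDegree_X_le]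

theorem evalInit_toMvPolynomial_last (a : Fin m → R) (g : R[X]) :
    evalInit a (g.toMvPolynomial (Fin.last m)) = g := by
  simp [evalInit]

variable {K : Type*} [Field K] [Fintype K]

instance {σ : Type*} [Finite σ] (d : ℕ) : Finite (restrictTotalDegree σ K d) :=
  Module.finite_of_finite K

instance {σ : Type*} [Finite σ] (d : ℕ) (P : MvPolynomial σ K → Prop) :
    Finite {F : MvPolynomial σ K // F.totalDegree ≤ d ∧ P F} :=
  .of_injective
    (fun F => (⟨F.1, (mem_restrictTotalDegree _ _ _).mpr F.2.1⟩ : restrictTotalDegree σ K d))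
    fun F G h => Subtype.ext (by simpa using congrArg Subtype.val h)

theorem natCard_totalDegree_le_exists_eval_snoc_eq_zero_mul (a : Fin m → K) (d : ℕ) :
    Nat.card {F : MvPolynomial (Fin (m + 1)) K //
        F.totalDegree ≤ d ∧ ∃ x, eval (Fin.snoc a x) F = 0} * Fintype.card K ^ (d + 1) =
      Nat.card {g : degreeLT K (d + 1) // ∃ x, (g : K[X]).eval x = 0} *
        Nat.card {F : MvPolynomial (Fin (m + 1)) K // F.totalDegree ≤ d} := by
  let V := restrictTotalDegree (Fin (m + 1)) K d
  let φ : V →ₗ[K] degreeLT K (d + 1) := (evalInit a).toLinearMap.restrict fun F hF =>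
    mem_degreeLT_succ_iff_natDegree_le.mpr <|
      (natDegree_evalInit_le a F).trans ((mem_restrictTotalDegree _ _ _).mp hF)
  have hφ : Surjective φ := fun g => by
    refine ⟨⟨(g : K[X]).toMvPolynomial (Fin.last m), (mem_restrictTotalDegree _ _ _).mpr ?_⟩,
      Subtype.ext (evalInit_toMvPolynomial_last a g)⟩
    exact (totalDegree_toMvPolynomial_le _ _).trans (mem_degreeLT_succ_iff_natDegree_le.mp g.2)
  have key := φ.toAddMonoidHom.natCard_subtype_comp_mul_natCard hφ
    fun g => ∃ x, (g : K[X]).eval x = 0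
  have hfib : Nat.card {F : V // ∃ x, (φ F : K[X]).eval x = 0} =
      Nat.card {F : MvPolynomial (Fin (m + 1)) K //
        F.totalDegree ≤ d ∧ ∃ x, eval (Fin.snoc a x) F = 0} :=
    Nat.card_congr <| (Equiv.subtypeSubtypeEquivSubtypeInter (· ∈ V)
      fun F => ∃ x, (evalInit a F).eval x = 0).trans
      (Equiv.subtypeEquivRight fun F => by simp [V, mem_restrictTotalDegree, eval_evalInit])
  have hV : Nat.card V = Nat.card {F : MvPolynomial (Fin (m + 1)) K // F.totalDegree ≤ d} :=
    Nat.card_congr (Equiv.subtypeEquivRight fun F => mem_restrictTotalDegree _ _ _)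
  rw [natCard_degreeLT, hV] at key
  rw [← hfib]
  exact key

end MvPolynomial

theorem prob_first_search_general (K : Type) [Field K] [Fintype K] (m d : ℕ) :
    (Nat.card {p : (Fin m → K) × MvPolynomial (Fin (m + 1)) K //
        p.2.totalDegree ≤ d ∧ ∃ x : K, MvPolynomial.eval (Fin.snoc p.1 x) p.2 = 0} : ℚ)
      = (∑ j ∈ Finset.Icc 1 d,
            (-1 : ℚ) ^ (j - 1) * ((Fintype.card K).choose j) * ((Fintype.card K : ℚ))⁻¹ ^ j
          + (-1 : ℚ) ^ d * ((Fintype.card K - 1).choose d) * ((Fintype.card K : ℚ))⁻¹ ^ (d + 1))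
        * ((Fintype.card K : ℚ) ^ m *
            Nat.card {F : MvPolynomial (Fin (m + 1)) K // F.totalDegree ≤ d}) := by
  refine mul_right_cancel₀ (b := (Fintype.card K : ℚ) ^ (d + 1)) (by positivity) ?_
  rw [Nat.card_congr (Equiv.subtypeProdEquivSigmaSubtype fun a (F : MvPolynomial (Fin (m + 1)) K) =>
      F.totalDegree ≤ d ∧ ∃ x, MvPolynomial.eval (Fin.snoc a x) F = 0), Nat.card_sigma,
    Nat.cast_sum, sum_mul]
  simp only [← Nat.cast_pow, ← Nat.cast_mul,
    MvPolynomial.natCard_totalDegree_le_exists_eval_snoc_eq_zero_mul]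
  push_cast
  rw [natCard_degreeLT_exists_eval_eq_zero, sum_const, card_univ, Fintype.card_fun,
    Fintype.card_fin, nsmul_eq_mul]
  push_cast
  ring

/-- The probability that a uniformly random pair `(a, F)`, with `a ∈ F_q^(r-1)` and `F` a
polynomial in `r = m+1 ≥ 2` variables of total degree at most `d`, is such that the univariate
polynomial `F(a, X_r)` has a root in `F_q`, equals
`Σ_{j=1}^{d} (-1)^{j-1} C(q,j) q^{-j} + (-1)^d C(q-1,d) q^{-d-1}`. -/
theorem prob_first_search (K : Type) [Field K] [Fintype K] (m d : ℕ)
    (hm : 1 ≤ m) (hd : 2 ≤ d) (hq : d < Fintype.card K) :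
    (Nat.card {p : (Fin m → K) × MvPolynomial (Fin (m + 1)) K //
        p.2.totalDegree ≤ d ∧ ∃ x : K, MvPolynomial.eval (Fin.snoc p.1 x) p.2 = 0} : ℚ)
      = (∑ j ∈ Finset.Icc 1 d,
            (-1 : ℚ) ^ (j - 1) * ((Fintype.card K).choose j) * ((Fintype.card K : ℚ))⁻¹ ^ j
          + (-1 : ℚ) ^ d * ((Fintype.card K - 1).choose d) * ((Fintype.card K : ℚ))⁻¹ ^ (d + 1))
        * ((Fintype.card K : ℚ) ^ m *
            Nat.card {F : MvPolynomial (Fin (m + 1)) K // F.totalDegree ≤ d}) :=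
  prob_first_search_general K m d
end

section
/- Let q > d ≥ 2 and μ_d := Σ_{j=1}^{d} (-1)^{j-1}/j!. Then |P_1[C_1 = 1] − μ_d| ≤ 2/q, where P_1[C_1=1] = Σ_{j=1}^{d} (-1)^{j-1} C(q,j) q^{-j} + (-1)^d C(q-1,d) q^{-d-1}. -/
open Finset

-- Weierstrass product inequality
lemma aux_one_sub_sum_le_prod (s : Finset ℕ) (f : ℕ → ℝ) (h0 : ∀ i ∈ s, 0 ≤ f i)
    (h1 : ∀ i ∈ s, f i ≤ 1) : 1 - ∑ i ∈ s, f i ≤ ∏ i ∈ s, (1 - f i) := by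
  induction s using Finset.cons_induction with
  | empty => simp
  | cons a s ha ih =>
    rw [Finset.sum_cons, Finset.prod_cons]
    have h0a := h0 a (mem_cons_self a s)
    have h1a := h1 a (mem_cons_self a s)
    have ih' := ih (fun i hi => h0 i (mem_cons_of_mem hi)) (fun i hi => h1 i (mem_cons_of_mem hi))
    have hs : ∑ i ∈ s, f i ≥ 0 := Finset.sum_nonneg (fun i hi => h0 i (mem_cons_of_mem hi))
    nlinarith [Finset.prod_le_one (fun i hi => by linarith [h0 i (mem_cons_of_mem hi), h1 i (mem_cons_of_mem hi)] : ∀ i ∈ s, (0:ℝ) ≤ 1 - f i) (fun i hi => by linarith [h0 i (mem_cons_of_mem hi)] : ∀ i ∈ s, (1:ℝ) - f i ≤ 1)]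

lemma aux_two_pow_le_factorial (n : ℕ) : 2 ^ n ≤ (n + 1).factorial := by
  induction n with
  | zero => simp
  | succ k ih =>
    rw [pow_succ, Nat.factorial_succ]
    calc 2 ^ k * 2 ≤ (k+1).factorial * 2 := by omega
    _ ≤ (k + 1 + 1) * (k+1).factorial := by nlinarith [Nat.one_le_iff_ne_zero.2 (Nat.factorial_ne_zero (k+1))]

lemma aux_sum_inv_factorial_le (n : ℕ) : ∑ k ∈ range n, ((k.factorial : ℝ))⁻¹ ≤ 3 := by
  cases n with
  | zero => norm_num
  | succ t =>
    rw [Finset.sum_range_succ']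
    have h1 : ∑ k ∈ range t, (((k+1).factorial : ℝ))⁻¹ ≤ ∑ k ∈ range t, (1/2 : ℝ) ^ k := by
      apply Finset.sum_le_sum
      intro k _
      rw [div_pow, one_pow, one_div]
      apply inv_anti₀ (by positivity)
      exact_mod_cast aux_two_pow_le_factorial k
    have h2 := sum_geometric_two_le t
    simp only [Nat.factorial_zero, Nat.cast_one, inv_one]
    linarith


lemma aux_choose_eq (q j : ℕ) (hjq : j ≤ q) :
    (q.choose j : ℝ) * ((q : ℝ))⁻¹ ^ j
      = (∏ i ∈ range j, (1 - (i : ℝ) / q)) / j.factorial := by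
  rcases Nat.eq_zero_or_pos q with rfl | hq
  · interval_cases j; simp
  have hq0 : (q : ℝ) ≠ 0 := by positivity
  have hfac : (j.factorial : ℝ) ≠ 0 := by exact_mod_cast j.factorial_ne_zero
  have hdesc : ((q.descFactorial j : ℕ) : ℝ) = (j.factorial : ℝ) * q.choose j := by
    exact_mod_cast congrArg (Nat.cast (R := ℝ)) (Nat.descFactorial_eq_factorial_mul_choose q j)
  have hprod : ((q.descFactorial j : ℕ) : ℝ) = ∏ i ∈ range j, ((q : ℝ) - i) := by
    rw [Nat.descFactorial_eq_prod_range]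
    push_cast [Nat.cast_prod]
    refine Finset.prod_congr rfl fun i hi => ?_
    have : i ≤ q := le_trans (le_of_lt (mem_range.1 hi)) hjq
    push_cast [Nat.cast_sub this]
    ring
  have h2 : ∏ i ∈ range j, (1 - (i : ℝ) / q) = (∏ i ∈ range j, ((q : ℝ) - i)) * ((q:ℝ))⁻¹ ^ j := by
    rw [show ((q:ℝ))⁻¹ ^ j = ∏ _i ∈ range j, ((q:ℝ))⁻¹ by simp, ← Finset.prod_mul_distrib]
    refine Finset.prod_congr rfl fun i _ => ?_
    field_simp
  rw [h2, ← hprod, hdesc]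
  field_simp

lemma aux_term_bound (q j : ℕ) (hq : 0 < q) (hjq : j ≤ q) :
    |(q.choose j : ℝ) * ((q : ℝ))⁻¹ ^ j - (j.factorial : ℝ)⁻¹|
      ≤ (∑ i ∈ range j, (i : ℝ)) / (j.factorial * q) := by
  have hq0 : (0:ℝ) < q := by exact_mod_cast hq
  have hfac : (0:ℝ) < j.factorial := by exact_mod_cast j.factorial_pos
  have hbd : ∀ i ∈ range j, (0:ℝ) ≤ (i:ℝ)/q ∧ (i:ℝ)/q ≤ 1 := by
    intro i hi
    have hi' : (i:ℝ) ≤ q := by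
      exact_mod_cast le_trans (le_of_lt (mem_range.1 hi)) hjq
    constructor
    · positivity
    · rw [div_le_one hq0]; exact hi'
  set P := ∏ i ∈ range j, (1 - (i : ℝ) / q) with hP
  have hP1 : P ≤ 1 :=
    Finset.prod_le_one (fun i hi => by linarith [(hbd i hi).2]) (fun i hi => by linarith [(hbd i hi).1])
  have hP0 : 1 - ∑ i ∈ range j, (i:ℝ)/q ≤ P :=
    aux_one_sub_sum_le_prod _ _ (fun i hi => (hbd i hi).1) (fun i hi => (hbd i hi).2)
  rw [aux_choose_eq q j hjq, ← hP]
  have hsum : ∑ i ∈ range j, (i:ℝ)/q = (∑ i ∈ range j, (i:ℝ)) / q := by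
    rw [Finset.sum_div]
  rw [hsum] at hP0
  have hS0 : (0:ℝ) ≤ ∑ i ∈ range j, (i:ℝ) := Finset.sum_nonneg fun i _ => by positivity
  have e : ((j.factorial:ℝ))⁻¹ - P / j.factorial = (1 - P) / j.factorial := by
    field_simp
  rw [abs_sub_comm, e, abs_of_nonneg (div_nonneg (by linarith) hfac.le)]
  have h3 : (1 - P) * q ≤ ∑ i ∈ range j, (i:ℝ) := (le_div_iff₀ hq0).1 (by linarith)
  rw [div_le_div_iff₀ hfac (by positivity)]
  nlinarith [mul_le_mul_of_nonneg_right h3 hfac.le]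

lemma aux_sum_bound (d : ℕ) (hd : 1 ≤ d) :
    ∑ j ∈ Icc 1 d, (∑ i ∈ range j, (i:ℝ)) / j.factorial ≤ 3/2 := by
  obtain ⟨e, rfl⟩ : ∃ e, d = e + 1 := ⟨d - 1, by omega⟩
  rw [← Finset.Ico_add_one_right_eq_Icc, Finset.sum_Ico_eq_sum_range]
  simp only [Nat.succ_sub_one, Nat.add_sub_cancel]
  rw [Finset.sum_range_succ']
  have hterm : ∀ m : ℕ, (∑ i ∈ range (1+(m+1)), (i:ℝ)) / (1+(m+1)).factorial
      = (1/2) * ((m.factorial:ℝ))⁻¹ := by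
    intro m
    have h1 : (∑ i ∈ range (m+2), (i:ℝ)) * 2 = ((m:ℝ)+2) * ((m:ℝ)+1) := by
      have h' : (∑ i ∈ range (m+2), i) * 2 = (m+2) * (m+1) := by
        simpa using Finset.sum_range_id_mul_two (m+2)
      have hc := congrArg (Nat.cast (R := ℝ)) h'
      push_cast at hc
      linarith
    have h2 : (((m+2).factorial : ℕ) : ℝ) = ((m:ℝ)+2) * (((m:ℝ)+1) * m.factorial) := by
      rw [Nat.factorial_succ, Nat.factorial_succ]; push_cast; ring
    have hm : (1+(m+1)) = m + 2 := by omega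
    rw [hm, h2]
    have hf : (m.factorial : ℝ) ≠ 0 := by exact_mod_cast m.factorial_ne_zero
    have hS : (∑ i ∈ range (m+2), (i:ℝ)) = ((m:ℝ)+2)*((m:ℝ)+1)/2 := by push_cast at h1 ⊢; linarith
    rw [hS]
    field_simp
  have h0 : (∑ i ∈ range (1+0), (i:ℝ)) / (1+0).factorial = 0 := by simp
  rw [h0]
  calc (∑ m ∈ range e, (∑ i ∈ range (1+(m+1)), (i:ℝ)) / (1+(m+1)).factorial) + 0
      = (1/2) * ∑ m ∈ range e, ((m.factorial:ℝ))⁻¹ := by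
        rw [add_zero, Finset.mul_sum]
        exact Finset.sum_congr rfl fun m _ => hterm m
    _ ≤ (1/2) * 3 := by linarith [aux_sum_inv_factorial_le e]
    _ = 3/2 := by norm_num

/-- For `q > d ≥ 2`, the probability
`P_1[C_1 = 1] = Σ_{j=1}^{d} (-1)^{j-1} C(q,j) q^{-j} + (-1)^d C(q-1,d) q^{-d-1}`
satisfies `|P_1[C_1=1] - μ_d| ≤ 2/q`, where `μ_d = Σ_{j=1}^{d} (-1)^{j-1}/j!`. -/
theorem prob_first_search_asymptotic (q d : ℕ) (hd : 2 ≤ d) (hq : d < q) :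
    |(∑ j ∈ Finset.Icc 1 d, (-1 : ℝ) ^ (j - 1) * (q.choose j) * ((q : ℝ))⁻¹ ^ j
        + (-1 : ℝ) ^ d * ((q - 1).choose d) * ((q : ℝ))⁻¹ ^ (d + 1))
      - ∑ j ∈ Finset.Icc 1 d, (-1 : ℝ) ^ (j - 1) / (j.factorial : ℝ)| ≤ 2 / q := by
  have hq0 : 0 < q := by omega
  have hqR : (0:ℝ) < q := by exact_mod_cast hq0
  set A := ∑ j ∈ Finset.Icc 1 d, (-1 : ℝ) ^ (j - 1) * (q.choose j) * ((q : ℝ))⁻¹ ^ j with hA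
  set E := (-1 : ℝ) ^ d * ((q - 1).choose d) * ((q : ℝ))⁻¹ ^ (d + 1) with hE
  set B := ∑ j ∈ Finset.Icc 1 d, (-1 : ℝ) ^ (j - 1) / (j.factorial : ℝ) with hB
  have hAB : |A - B| ≤ (3/2) / q := by
    rw [hA, hB, ← Finset.sum_sub_distrib]
    calc |∑ j ∈ Finset.Icc 1 d, ((-1 : ℝ) ^ (j - 1) * (q.choose j) * ((q : ℝ))⁻¹ ^ j
            - (-1 : ℝ) ^ (j - 1) / (j.factorial : ℝ))|
        ≤ ∑ j ∈ Finset.Icc 1 d, |(-1 : ℝ) ^ (j - 1) * (q.choose j) * ((q : ℝ))⁻¹ ^ j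
            - (-1 : ℝ) ^ (j - 1) / (j.factorial : ℝ)| := Finset.abs_sum_le_sum_abs _ _
      _ ≤ ∑ j ∈ Finset.Icc 1 d, (∑ i ∈ range j, (i:ℝ)) / (j.factorial * q) := by
          apply Finset.sum_le_sum
          intro j hj
          have hjq : j ≤ q := le_of_lt (lt_of_le_of_lt (Finset.mem_Icc.1 hj).2 hq)
          have heq : (-1 : ℝ) ^ (j - 1) * (q.choose j) * ((q : ℝ))⁻¹ ^ j
              - (-1 : ℝ) ^ (j - 1) / (j.factorial : ℝ)
              = (-1 : ℝ) ^ (j - 1) * ((q.choose j : ℝ) * ((q : ℝ))⁻¹ ^ j - ((j.factorial : ℝ))⁻¹) := by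
            field_simp
          rw [heq, abs_mul, abs_pow, abs_neg, abs_one, one_pow, one_mul]
          exact aux_term_bound q j hq0 hjq
      _ = (∑ j ∈ Finset.Icc 1 d, (∑ i ∈ range j, (i:ℝ)) / j.factorial) / q := by
          rw [Finset.sum_div]
          exact Finset.sum_congr rfl fun j _ => by rw [div_div]
      _ ≤ (3/2) / q :=
          div_le_div_of_nonneg_right (aux_sum_bound d (by omega)) hqR.le
  have hE' : |E| ≤ 1 / (2 * q) := by
    have hC : 2 * ((q-1).choose d) ≤ q ^ d := by
      calc 2 * ((q-1).choose d) ≤ d.factorial * ((q-1).choose d) := by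
            have h2 : 2 ≤ d.factorial := le_trans (by norm_num) (Nat.factorial_le hd)
            exact Nat.mul_le_mul_right _ h2
        _ = (q-1).descFactorial d := (Nat.descFactorial_eq_factorial_mul_choose _ _).symm
        _ ≤ (q-1)^d := Nat.descFactorial_le_pow _ _
        _ ≤ q^d := Nat.pow_le_pow_left (by omega) d
    have hCR : (((q-1).choose d : ℕ) : ℝ) ≤ (q:ℝ)^d / 2 := by
      rw [le_div_iff₀ (by norm_num : (0:ℝ) < 2)]
      calc (((q-1).choose d : ℕ) : ℝ) * 2 = ((2 * ((q-1).choose d) : ℕ) : ℝ) := by push_cast; ring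
        _ ≤ ((q^d : ℕ) : ℝ) := by exact_mod_cast hC
        _ = (q:ℝ)^d := by push_cast; rfl
    rw [hE, abs_mul, abs_mul, abs_pow, abs_neg, abs_one, one_pow, one_mul,
      abs_of_nonneg (Nat.cast_nonneg _), abs_of_nonneg (by positivity : (0:ℝ) ≤ ((q:ℝ))⁻¹ ^ (d+1))]
    calc (((q-1).choose d : ℕ) : ℝ) * ((q:ℝ))⁻¹ ^ (d+1)
        ≤ ((q:ℝ)^d/2) * ((q:ℝ))⁻¹^(d+1) := mul_le_mul_of_nonneg_right hCR (by positivity)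
      _ = 1/(2*q) := by rw [inv_pow]; field_simp; ring
  have hsplit : A + E - B = (A - B) + E := by ring
  rw [hsplit]
  calc |(A - B) + E| ≤ |A - B| + |E| := abs_add_le _ _
    _ ≤ (3/2)/q + 1/(2*q) := add_le_add hAB hE'
    _ = 2/q := by field_simp; ring
end

section
/- Let q > d, r ≥ 2, and let a_1,...,a_s ∈ F_q^{r-1} be distinct points such that for each 1 ≤ j ≤ κ_s the multivariate Vandermonde matrix M_j := (a_i^{ω})_{1≤i≤s, |ω|≤j} has maximal rank min{D_j, s}, where D_j := C(j+r-1, r-1) and κ_s is the unique integer with D_{κ_s - 1} < s ≤ D_{κ_s}. Let Φ : F_{r,d} → (F_q[T]_{≤d})^s be the linear map Φ(F) := (F(a_1,T),...,F(a_s,T)). If s ≤ min{D_d, q^{r-1}}, then dim Im(Φ) = C(κ_s - 1 + r, r) + s(d - κ_s + 1). -/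
/-!
Write `F = ∑ₖ cₖ(X₁,…,X_{r-1}) X_r^k` with `deg cₖ ≤ d - k`. Then `Φ F = (∑ₖ cₖ(aᵢ) T^k)ᵢ`, so
the image of `Φ` is the direct sum over `k ≤ d` of the spaces `Vⱼ` (`j = d - k`) of value vectors
`(c(a₁),…,c(a_s))` of polynomials of degree `≤ j`, placed in the coefficient of `T^k`. `Vⱼ` is
the column space of `Mⱼ`, of dimension `min(Dⱼ, s)`: by hypothesis for `1 ≤ j ≤ κ_s`, trivially
for `j = 0`, and for `j ≥ κ_s` because `V_{κ_s}` is already everything. Summing,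
`∑_{j<κ_s} Dⱼ + (d - κ_s + 1) s`, and the hockey-stick identity evaluates the first sum.
-/

open MvPolynomial

section Vandermonde

variable {K ι σ : Type*} [Field K] [Fintype σ]

instance finite_exponents_sum_le (j : ℕ) : Finite {ω : σ → ℕ // ∑ t, ω t ≤ j} :=
  Finite.of_injective
    (fun ω t => (⟨ω.1 t, Nat.lt_succ_of_le
      ((Finset.single_le_sum (fun _ _ => Nat.zero_le _) (Finset.mem_univ t)).trans ω.2)⟩ :
        Fin (j + 1)))
    fun _ _ h => Subtype.ext <| funext fun t => congrArg Fin.val (congrFun h t)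

/-- The column space of the Vandermonde matrix `Mⱼ`: the value vectors at the points `a i` of
polynomials of total degree `≤ j`. -/
def vandermondeSpan (a : ι → σ → K) (j : ℕ) : Submodule K (ι → K) :=
  Submodule.span K
    (Set.range fun ω : {ω : σ → ℕ // ∑ t, ω t ≤ j} => fun i => ∏ t, a i t ^ ω.1 t)

variable (a : ι → σ → K)

theorem vandermondeSpan_mono : Monotone (vandermondeSpan a) := fun _ _ h =>
  Submodule.span_mono <| Set.range_subset_iff.2 fun ω => ⟨⟨ω.1, ω.2.trans h⟩, rfl⟩

theorem vandermondeSpan_zero : vandermondeSpan a 0 = K ∙ 1 := by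
  have hzero : ∀ ω : {ω : σ → ℕ // ∑ t, ω t ≤ 0}, ω.1 = 0 := fun ω =>
    funext fun t => Nat.eq_zero_of_le_zero <|
      (Finset.single_le_sum (fun _ _ => Nat.zero_le _) (Finset.mem_univ t)).trans ω.2
  have hrange : (Set.range fun ω : {ω : σ → ℕ // ∑ t, ω t ≤ 0} =>
      fun i => ∏ t, a i t ^ ω.1 t) = {1} := by
    refine Set.eq_singleton_iff_unique_mem.2 ⟨⟨⟨0, by simp⟩, by simp [Pi.one_def]⟩, ?_⟩
    rintro _ ⟨ω, rfl⟩
    simp [hzero ω, Pi.one_def]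
  rw [vandermondeSpan, hrange]

theorem finrank_vandermondeSpan_zero [Fintype ι] :
    Module.finrank K (vandermondeSpan a 0) = min 1 (Fintype.card ι) := by
  rw [vandermondeSpan_zero]
  rcases isEmpty_or_nonempty ι with hι | hι
  · simp [Submodule.eq_bot_of_subsingleton]
  · rw [finrank_span_singleton one_ne_zero]
    exact (min_eq_left Fintype.card_pos).symm

theorem finrank_vandermondeSpan_eq_finrank_span_rows [Finite ι] (j : ℕ) :
    Module.finrank K (vandermondeSpan a j) = Module.finrank K (Submodule.span K (Set.range
      fun i (ω : {ω : σ → ℕ // ∑ t, ω t ≤ j}) => ∏ t, a i t ^ ω.1 t)) := by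
  have := Fintype.ofFinite {ω : σ → ℕ // ∑ t, ω t ≤ j}
  let M : Matrix ι {ω : σ → ℕ // ∑ t, ω t ≤ j} K := Matrix.of fun i ω => ∏ t, a i t ^ ω.1 t
  exact M.rank_eq_finrank_span_cols.symm.trans M.rank_eq_finrank_span_row

end Vandermonde

section VandermondeRank

variable {K : Type*} [Field K] {m s κ : ℕ} (a : Fin s → Fin m → K)

theorem finrank_vandermondeSpan (hκ : s ≤ (κ + m).choose m)
    (hrank : ∀ j, 1 ≤ j → j ≤ κ →
      Module.finrank K ↥(Submodule.span K (Set.range (fun i : Fin s =>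
          (fun ω : {ω : Fin m → ℕ // ∑ t, ω t ≤ j} => ∏ t, a i t ^ ω.1 t))))
        = min ((j + m).choose m) s) (j : ℕ) :
    Module.finrank K (vandermondeSpan a j) = min ((j + m).choose m) s := by
  have hsmall : ∀ j ≤ κ, Module.finrank K (vandermondeSpan a j) = min ((j + m).choose m) s := by
    intro j hj
    rcases Nat.eq_zero_or_pos j with rfl | hj₀
    · simpa using finrank_vandermondeSpan_zero a
    · rw [finrank_vandermondeSpan_eq_finrank_span_rows, hrank j hj₀ hj]
  rcases le_total j κ with hj | hj
  · exact hsmall j hj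
  have hsj : s ≤ (j + m).choose m := hκ.trans (Nat.choose_le_choose m (by omega))
  rw [min_eq_right hsj]
  refine le_antisymm ((Submodule.finrank_le _).trans_eq (by simp)) ?_
  calc s = Module.finrank K (vandermondeSpan a κ) := by rw [hsmall κ le_rfl, min_eq_right hκ]
    _ ≤ _ := Submodule.finrank_mono (vandermondeSpan_mono a hj)

end VandermondeRank

theorem sum_range_min_choose {m s κ d : ℕ} (hκd : κ ≤ d) (hκ₁ : s ≤ (κ + m).choose m)
    (hκ₂ : ∀ j < κ, (j + m).choose m < s) :
    ∑ j ∈ Finset.range (d + 1), min ((j + m).choose m) s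
      = (κ + m).choose (m + 1) + s * (d - κ + 1) := by
  have hlow : ∑ j ∈ Finset.range κ, min ((j + m).choose m) s = (κ + m).choose (m + 1) := by
    rw [Finset.sum_congr rfl fun j hj => min_eq_left (hκ₂ j (Finset.mem_range.1 hj)).le]
    rcases κ with _ | n
    · simp
    · rw [Nat.sum_range_add_choose, Nat.add_right_comm]
  have hhigh : ∑ j ∈ Finset.Ico κ (d + 1), min ((j + m).choose m) s = s * (d - κ + 1) := by
    rw [Finset.sum_congr rfl fun j hj => min_eq_right
      (hκ₁.trans (Nat.choose_le_choose m (by have := (Finset.mem_Ico.1 hj).1; omega)))]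
    rw [Finset.sum_const, Nat.card_Ico, smul_eq_mul, mul_comm]
    congr 1
    omega
  rw [← Finset.sum_range_add_sum_Ico _ (by omega : κ ≤ d + 1), hlow, hhigh]

section SumMonomials

variable {R ι : Type*} [CommSemiring R] {n : ℕ} (p : Fin n → Submodule R (ι → R))

noncomputable def sumMonomials : (∀ k, p k) →ₗ[R] (ι → Polynomial R) :=
  LinearMap.lsum R (fun k => p k) R fun k =>
    (Polynomial.monomial (k : ℕ)).compLeft ι ∘ₗ (p k).subtype

theorem sumMonomials_apply (v : ∀ k, p k) (i : ι) :
    sumMonomials p v i = ∑ k : Fin n, Polynomial.monomial (k : ℕ) ((v k : ι → R) i) := by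
  simp [sumMonomials]

theorem sumMonomials_injective : Function.Injective (sumMonomials p) := by
  intro v w h
  funext k
  refine Subtype.ext <| funext fun i => ?_
  have hcoeff := congrArg (Polynomial.coeff · k) (congrFun h i)
  simpa [sumMonomials_apply, Polynomial.finsetSum_coeff, Polynomial.coeff_monomial,
    Fin.val_inj] using hcoeff

theorem range_sumMonomials :
    LinearMap.range (sumMonomials p)
      = ⨆ k, (p k).map ((Polynomial.monomial (k : ℕ)).compLeft ι) := by
  rw [LinearMap.range_eq_map, ← LinearMap.iSup_range_single, Submodule.map_iSup]
  refine iSup_congr fun k => ?_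
  have hcomp : sumMonomials p ∘ₗ LinearMap.single R (fun k => p k) k
      = (Polynomial.monomial (k : ℕ)).compLeft ι ∘ₗ (p k).subtype :=
    congrFun ((LinearMap.lsum R (fun k => p k) R).symm_apply_apply _) k
  rw [← LinearMap.range_comp, hcomp, LinearMap.range_comp, Submodule.range_subtype]

theorem finrank_range_sumMonomials {K : Type*} [Field K] [Finite ι]
    (p : Fin n → Submodule K (ι → K)) :
    Module.finrank K (LinearMap.range (sumMonomials p)) = ∑ k, Module.finrank K (p k) := by
  rw [LinearMap.finrank_range_of_inj (sumMonomials_injective p), Module.finrank_pi_fintype]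

end SumMonomials

section EvaluationMap

variable {K : Type*} [Field K] {m s : ℕ}

theorem aeval_snoc_monomial (b : Fin m → K) (α : Fin (m + 1) →₀ ℕ) :
    aeval (Fin.snoc (fun t => Polynomial.C (b t)) Polynomial.X) (monomial α (1 : K))
      = Polynomial.monomial (α (Fin.last m)) (∏ t, b t ^ α t.castSucc) := by
  rw [aeval_monomial, map_one, one_mul, Finsupp.prod_fintype _ _ (fun _ => pow_zero _),
    Fin.prod_univ_castSucc]
  simp [← Polynomial.C_mul_X_pow_eq_monomial, ← map_pow, ← map_prod]

theorem sum_le_iff_last_le_and_sum_castSucc_le {d : ℕ} (α : Fin (m + 1) → ℕ) :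
    ∑ t, α t ≤ d ↔ α (Fin.last m) ≤ d ∧ ∑ t : Fin m, α t.castSucc ≤ d - α (Fin.last m) := by
  rw [Fin.sum_univ_castSucc]
  omega

theorem range_eq_iSup_map_vandermondeSpan (a : Fin s → Fin m → K) (d : ℕ)
    (Φ : ↥(restrictTotalDegree (Fin (m + 1)) K d) →ₗ[K] (Fin s → Polynomial K))
    (hΦ : ∀ F i, Φ F i = aeval (Fin.snoc (fun t => Polynomial.C (a i t)) Polynomial.X)
        (F : MvPolynomial (Fin (m + 1)) K)) :
    LinearMap.range Φ = ⨆ k : Fin (d + 1),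
      (vandermondeSpan a (d - k)).map ((Polynomial.monomial (k : ℕ)).compLeft (Fin s)) := by
  let E : MvPolynomial (Fin (m + 1)) K →ₗ[K] (Fin s → Polynomial K) := LinearMap.pi fun i =>
    (aeval (Fin.snoc (fun t => Polynomial.C (a i t)) Polynomial.X)).toLinearMap
  have hΦE : Φ = E ∘ₗ (restrictTotalDegree (Fin (m + 1)) K d).subtype :=
    LinearMap.ext fun F => funext (hΦ F)
  rw [hΦE, LinearMap.range_comp, Submodule.range_subtype, restrictTotalDegree,
    restrictSupport_eq_span, Submodule.map_span]
  simp_rw [vandermondeSpan, Submodule.map_span, ← Submodule.span_iUnion]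
  apply le_antisymm
  · rw [Submodule.span_le]
    rintro _ ⟨_, ⟨α, hα, rfl⟩, rfl⟩
    rw [Set.mem_ofPred_eq, Finsupp.sum_fintype _ _ fun _ => rfl,
      sum_le_iff_last_le_and_sum_castSucc_le] at hα
    refine Submodule.subset_span <| Set.mem_iUnion.2 ⟨⟨α (Fin.last m), by omega⟩,
      ⟨_, ⟨⟨fun t => α t.castSucc, hα.2⟩, rfl⟩, ?_⟩⟩
    funext i
    simp [E, aeval_snoc_monomial]
  · rw [Submodule.span_le, Set.iUnion_subset_iff]
    rintro k _ ⟨_, ⟨ω, rfl⟩, rfl⟩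
    let α := Finsupp.equivFunOnFinite.symm (Fin.snoc ω.1 k : Fin (m + 1) → ℕ)
    refine Submodule.subset_span ⟨monomial α 1, ⟨α, ?_, rfl⟩, ?_⟩
    · rw [Set.mem_ofPred_eq, Finsupp.sum_fintype _ _ fun _ => rfl,
        sum_le_iff_last_le_and_sum_castSucc_le]
      simpa [α] using ⟨k.is_le, ω.2⟩
    · funext i
      simp [E, aeval_snoc_monomial, α]

end EvaluationMap

theorem dim_image_evaluation_map_general (K : Type) [Field K] (m d s κ : ℕ)
    (a : Fin s → Fin m → K)
    (hκ₁ : s ≤ (κ + m).choose m) (hκ₂ : ∀ j < κ, (j + m).choose m < s)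
    (hrank : ∀ j, 1 ≤ j → j ≤ κ →
      Module.finrank K ↥(Submodule.span K (Set.range (fun i : Fin s =>
          (fun ω : {ω : Fin m → ℕ // ∑ t, ω t ≤ j} => ∏ t, a i t ^ ω.1 t))))
        = min ((j + m).choose m) s)
    (hsD : s ≤ (d + m).choose m)
    (Φ : ↥(MvPolynomial.restrictTotalDegree (Fin (m + 1)) K d) →ₗ[K] (Fin s → Polynomial K))
    (hΦ : ∀ F i, Φ F i = MvPolynomial.aeval
        (Fin.snoc (fun t => Polynomial.C (a i t)) Polynomial.X)
        (F : MvPolynomial (Fin (m + 1)) K)) :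
    Module.finrank K ↥(LinearMap.range Φ) = (κ + m).choose (m + 1) + s * (d - κ + 1) := by
  have hκd : κ ≤ d := not_lt.1 fun h => (hκ₂ d h).not_ge hsD
  rw [range_eq_iSup_map_vandermondeSpan a d Φ hΦ, ← range_sumMonomials,
    finrank_range_sumMonomials, ← sum_range_min_choose hκd hκ₁ hκ₂,
    Fin.sum_univ_eq_sum_range (fun k => Module.finrank K (vandermondeSpan a (d - k))),
    ← Finset.sum_range_reflect]
  refine Finset.sum_congr rfl fun j hj => ?_
  rw [finrank_vandermondeSpan a hκ₁ hrank, Nat.add_sub_cancel,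
    Nat.sub_sub_self (Finset.mem_range_succ_iff.1 hj)]

/-- Dimension of the image of the evaluation map `Φ(F) = (F(a_1,T),…,F(a_s,T))` on the space
of polynomials in `r = m+1` variables of total degree at most `d`, for distinct points
`a_1,…,a_s ∈ F_q^m` whose multivariate Vandermonde matrices `M_j` (with columns indexed by
exponents `ω` with `|ω| ≤ j`) have maximal rank `min{D_j, s}` for `1 ≤ j ≤ κ_s`, where
`D_j = C(j+m, m)` and `κ_s` is the unique integer with `D_{κ_s-1} < s ≤ D_{κ_s}`:
if `s ≤ min{D_d, q^m}`, then `dim Im Φ = C(κ_s - 1 + r, r) + s(d - κ_s + 1)`. -/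
theorem dim_image_evaluation_map (K : Type) [Field K] [Fintype K] (m d s κ : ℕ)
    (hm : 1 ≤ m) (hd : 2 ≤ d) (hq : d < Fintype.card K) (hs : 1 ≤ s)
    (a : Fin s → Fin m → K) (ha : Function.Injective a)
    (hκ₁ : s ≤ (κ + m).choose m) (hκ₂ : ∀ j < κ, (j + m).choose m < s)
    (hrank : ∀ j, 1 ≤ j → j ≤ κ →
      Module.finrank K ↥(Submodule.span K (Set.range (fun i : Fin s =>
          (fun ω : {ω : Fin m → ℕ // ∑ t, ω t ≤ j} => ∏ t, a i t ^ ω.1 t))))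
        = min ((j + m).choose m) s)
    (hsD : s ≤ (d + m).choose m) (hsq : s ≤ Fintype.card K ^ m)
    (Φ : ↥(MvPolynomial.restrictTotalDegree (Fin (m + 1)) K d) →ₗ[K] (Fin s → Polynomial K))
    (hΦ : ∀ F i, Φ F i = MvPolynomial.aeval
        (Fin.snoc (fun t => Polynomial.C (a i t)) Polynomial.X)
        (F : MvPolynomial (Fin (m + 1)) K)) :
    Module.finrank K ↥(LinearMap.range Φ) = (κ + m).choose (m + 1) + s * (d - κ + 1) :=
  dim_image_evaluation_map_general K m d s κ a hκ₁ hκ₂ hrank hsD Φ hΦ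
end

section
/- Let r ≥ 2, d ≥ 1, s ≥ 1 with s ≤ C(d+r-1, r-1). For 1 ≤ i ≤ s let κ_i be the unique nonnegative integer with D_{κ_i - 1} < i ≤ D_{κ_i}, where D_j := C(j+r-1, r-1) and D_{-1} := 0. Then Σ_{i=1}^{s} (d + 1 − κ_i) = C(κ_s − 1 + r, r) + s(d − κ_s + 1). -/
open Finset

lemma hockey_aux (t : ℕ) : ∀ K, ∑ j ∈ Finset.range K, (j + t).choose t = (K + t).choose (t + 1)
  | 0 => by simp [Nat.choose_eq_zero_of_lt]
  | (K + 1) => by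
      rw [Finset.sum_range_succ, hockey_aux t K]
      have h : K + 1 + t = (K + t) + 1 := by omega
      rw [h, Nat.choose_succ_succ, Nat.succ_eq_add_one, Nat.add_comm]

/-- For `r ≥ 2`, `d ≥ 1`, `1 ≤ s ≤ C(d+r-1, r-1)`, if for each `1 ≤ i ≤ s` the number
`κ i` satisfies `D_{κ_i - 1} < i ≤ D_{κ_i}` where `D_j := C(j+r-1, r-1)` (and `D_{-1}=0`),
then `Σ_{i=1}^{s} (d+1-κ_i) = C(κ_s - 1 + r, r) + s(d - κ_s + 1)`. -/
theorem sum_kappa_identity (r d s : ℕ) (hr : 2 ≤ r) (hd : 1 ≤ d) (hs : 1 ≤ s)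
    (hsD : s ≤ (d + r - 1).choose (r - 1)) (κ : ℕ → ℕ)
    (hκ : ∀ i, 1 ≤ i → i ≤ s →
      i ≤ (κ i + r - 1).choose (r - 1) ∧ ∀ j < κ i, (j + r - 1).choose (r - 1) < i) :
    ∑ i ∈ Finset.Icc 1 s, (d + 1 - κ i)
      = (κ s + (r - 1)).choose r + s * (d - κ s + 1) := by
  obtain ⟨t, rfl⟩ : ∃ t, r = t + 2 := ⟨r - 2, by omega⟩
  have hsub : ∀ j : ℕ, j + (t + 2) - 1 = j + t + 1 := by omega
  have hsub2 : t + 2 - 1 = t + 1 := by omega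
  simp only [hsub, hsub2] at hκ hsD ⊢
  have hκs := hκ s hs le_rfl
  have hDmono : ∀ a b : ℕ, a ≤ b →
      (a + t + 1).choose (t + 1) ≤ (b + t + 1).choose (t + 1) := by
    intro a b hab
    exact Nat.choose_le_choose (t + 1) (by omega)
  have hKd : κ s ≤ d := by
    by_contra h
    have := hκs.2 d (by omega)
    omega
  have hκle : ∀ i, 1 ≤ i → i ≤ s → κ i ≤ κ s := by
    intro i h1 h2
    by_contra h
    have := (hκ i h1 h2).2 (κ s) (by omega)
    have hsK := hκs.1
    omega
  have hsplit : ∑ i ∈ Finset.Icc 1 s, (d + 1 - κ i)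
      = ∑ i ∈ Finset.Icc 1 s, ((κ s - κ i) + (d + 1 - κ s)) := by
    apply Finset.sum_congr rfl
    intro i hi
    rw [Finset.mem_Icc] at hi
    have := hκle i hi.1 hi.2
    omega
  rw [hsplit, Finset.sum_add_distrib, Finset.sum_const, Nat.card_Icc]
  have hkey : ∑ i ∈ Finset.Icc 1 s, (κ s - κ i)
      = ∑ j ∈ Finset.range (κ s), (j + t + 1).choose (t + 1) := by
    have h1 : ∀ i ∈ Finset.Icc 1 s,
        κ s - κ i = ∑ j ∈ Finset.range (κ s), if κ i ≤ j then 1 else 0 := by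
      intro i hi
      rw [Finset.mem_Icc] at hi
      rw [← Finset.card_filter]
      have : Finset.filter (fun j => κ i ≤ j) (Finset.range (κ s))
          = Finset.Ico (κ i) (κ s) := by
        ext j
        simp only [Finset.mem_filter, Finset.mem_range, Finset.mem_Ico]
        omega
      rw [this, Nat.card_Ico]
    rw [Finset.sum_congr rfl h1, Finset.sum_comm]
    apply Finset.sum_congr rfl
    intro j hj
    rw [Finset.mem_range] at hj
    have hDjs : (j + t + 1).choose (t + 1) < s := hκs.2 j hj
    rw [← Finset.card_filter]
    have : Finset.filter (fun i => κ i ≤ j) (Finset.Icc 1 s)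
        = Finset.Icc 1 ((j + t + 1).choose (t + 1)) := by
      ext i
      simp only [Finset.mem_filter, Finset.mem_Icc]
      constructor
      · rintro ⟨⟨h1i, his⟩, hκij⟩
        exact ⟨h1i, le_trans (hκ i h1i his).1 (hDmono _ _ hκij)⟩
      · rintro ⟨h1i, hiDj⟩
        have his : i ≤ s := by omega
        refine ⟨⟨h1i, his⟩, ?_⟩
        by_contra h
        have := (hκ i h1i his).2 j (by omega)
        omega
    rw [this, Nat.card_Icc]
    omega
  rw [hkey]
  have hhs : ∑ j ∈ Finset.range (κ s), (j + t + 1).choose (t + 1)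
      = (κ s + t + 1).choose (t + 2) := by
    have h := hockey_aux (t + 1) (κ s)
    simp only [← Nat.add_assoc] at h
    convert h using 2
  rw [hhs]
  have e1 : s + 1 - 1 = s := by omega
  have e2 : d + 1 - κ s = d - κ s + 1 := by omega
  rw [e1, e2, smul_eq_mul, ← Nat.add_assoc]
end

section
/- Let q be a prime power, n := q^{r-1}, and let 1 ≤ m ≤ n be an integer. Then Σ_{j=0}^{n-m} C(n-m, j) / C(n-1, j) = n/m. -/
lemma key_term (a b k : ℕ) (hk : k ≤ a) (hab : a ≤ b) :
    ((b:ℚ)+1-a)/((b:ℚ)+1) * ((a.choose k : ℚ)/(b.choose k))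
      = (a.choose k : ℚ)/((b+1).choose k) - (a.choose (k+1) : ℚ)/((b+1).choose (k+1)) := by
  have hkb : k ≤ b := hk.trans hab
  have hD : ((b+1).choose k : ℚ) ≠ 0 := by
    exact_mod_cast (Nat.choose_pos (by omega)).ne'
  have hD' : ((b+1).choose (k+1) : ℚ) ≠ 0 := by
    exact_mod_cast (Nat.choose_pos (by omega)).ne'
  have hE : (b.choose k : ℚ) ≠ 0 := by
    exact_mod_cast (Nat.choose_pos hkb).ne'
  have hb1 : ((b:ℚ)+1) ≠ 0 := by positivity
  have e1 : ((k:ℚ)+1) * a.choose (k+1) = ((a:ℚ)-k) * a.choose k := by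
    have h := Nat.choose_succ_right_eq a k
    have h' : ((a.choose (k+1) * (k+1) : ℕ) : ℚ) = ((a.choose k * (a - k) : ℕ) : ℚ) := by
      exact_mod_cast h
    push_cast [Nat.cast_sub hk] at h'
    linarith
  have e2 : ((k:ℚ)+1) * (b+1).choose (k+1) = ((b:ℚ)+1-k) * (b+1).choose k := by
    have h := Nat.choose_succ_right_eq (b+1) k
    have h' : (((b+1).choose (k+1) * (k+1) : ℕ) : ℚ) = (((b+1).choose k * (b + 1 - k) : ℕ) : ℚ) := by
      exact_mod_cast h
    push_cast [Nat.cast_sub (by omega : k ≤ b + 1)] at h'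
    linarith
  have e3 : ((b:ℚ)+1) * b.choose k = ((k:ℚ)+1) * (b+1).choose (k+1) := by
    have h := Nat.add_one_mul_choose_eq b k
    have h' : (((b+1) * b.choose k : ℕ) : ℚ) = (((b+1).choose (k+1) * (k+1) : ℕ) : ℚ) := by
      exact_mod_cast h
    push_cast at h'
    linarith
  have hG : (((b:ℚ)+1-a) * (a.choose k)) * (((b+1).choose k : ℚ) * ((b+1).choose (k+1)))
      = ((a.choose k : ℚ) * ((b+1).choose (k+1)) - (a.choose (k+1) : ℚ) * ((b+1).choose k))
        * (((b:ℚ)+1) * (b.choose k)) := by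
    linear_combination (-((a.choose k : ℚ) * ((b+1).choose (k+1)) - (a.choose (k+1) : ℚ) * ((b+1).choose k))) * e3
      - (a.choose k : ℚ) * ((b+1).choose (k+1)) * e2
      + ((b+1).choose k : ℚ) * ((b+1).choose (k+1)) * e1
  rw [div_mul_div_comm, div_sub_div _ _ hD hD',
    div_eq_div_iff (mul_ne_zero hb1 hE) (mul_ne_zero hD hD')]
  linear_combination hG

lemma aux_sum (a b : ℕ) (hab : a ≤ b) :
    ∑ k ∈ Finset.range (a+1), (a.choose k : ℚ)/(b.choose k)
      = ((b:ℚ)+1)/((b:ℚ)+1-a) := by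
  have hca : (a:ℚ) ≤ b := by exact_mod_cast hab
  have hc : ((b:ℚ)+1-a) ≠ 0 := by linarith
  have hb1 : ((b:ℚ)+1) ≠ 0 := by positivity
  have h : ∑ k ∈ Finset.range (a+1),
      (((b:ℚ)+1-a)/((b:ℚ)+1)) * ((a.choose k : ℚ)/(b.choose k)) = 1 := by
    rw [Finset.sum_congr rfl (fun k hk =>
      key_term a b k (Nat.lt_succ_iff.mp (Finset.mem_range.mp hk)) hab),
      Finset.sum_range_sub' (fun k => (a.choose k : ℚ)/((b+1).choose k))]
    simp [Nat.choose_succ_self]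
  rw [← Finset.mul_sum] at h
  rw [eq_div_iff hc]
  field_simp at h
  linear_combination h

/-- Let `q` be a prime power, `n := q^(r-1)`, and `1 ≤ m ≤ n`. Then
`Σ_{j=0}^{n-m} C(n-m, j) / C(n-1, j) = n/m`. -/
theorem sum_choose_ratio (q r m n : ℕ) (hq : IsPrimePow q) (hn : n = q ^ (r - 1))
    (hm1 : 1 ≤ m) (hmn : m ≤ n) :
    ∑ j ∈ Finset.range (n - m + 1), ((n - m).choose j : ℚ) / ((n - 1).choose j)
      = (n : ℚ) / m := by
  have h1n : 1 ≤ n := hm1.trans hmn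
  have hab : n - m ≤ n - 1 := by omega
  rw [aux_sum _ _ hab]
  have h1 : ((n - 1 : ℕ) : ℚ) = (n : ℚ) - 1 := by push_cast [Nat.cast_sub h1n]; ring
  have h2 : ((n - m : ℕ) : ℚ) = (n : ℚ) - m := by push_cast [Nat.cast_sub hmn]; ring
  rw [h1, h2]
  ring_nf
end
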